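/- (Transitivity of the lifted order) The pointwise order on rational step functions, defined by f ≤ₛ g := fold⋆ (map2 (·≤·) f g), is transitive: for all f, g, h : S ℚ, f ≤ₛ g → g ≤ₛ h → f ≤ₛ h. -/

import Mathlib

set_option linter.unusedVariables false

/-- Rationals strictly between 0 and 1. -/
abbrev OO : Type := {q : ℚ // 0 < q ∧ q < 1}

/-- Rational step functions on the unit interval with values in `X`. -/
inductive S (X : Type) : Type
  | const : X → S X
  | glue : OO → S X → S X → S X

namespace S

def divO (a o : OO) (h : a.1 < o.1) : OO :=
  ⟨a.1 / o.1, div_pos a.2.1 o.2.1, (div_lt_one o.2.1).2 h⟩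

def subO (a o : OO) (h : o.1 < a.1) : OO :=
  ⟨(a.1 - o.1) / (1 - o.1),
    div_pos (by linarith) (by linarith [o.2.2]),
    (div_lt_one (by linarith [o.2.2])).2 (by linarith [a.2.2])⟩

/-- Left split: the part of the step function on `[0,a]`, rescaled to `[0,1]`. -/
def splitL {X : Type} : S X → OO → S X
  | const x, _ => const x
  | glue o f g, a =>
      if h : a.1 < o.1 then splitL f (divO a o h)
      else if h' : o.1 < a.1 then glue (divO o a h') f (splitL g (subO a o h'))
      else f

/-- Right split: the part of the step function on `[a,1]`, rescaled to `[0,1]`. -/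
def splitR {X : Type} : S X → OO → S X
  | const x, _ => const x
  | glue o f g, a =>
      if h : a.1 < o.1 then glue (subO o a h) (splitR f (divO a o h)) g
      else if h' : o.1 < a.1 then splitR g (subO a o h')
      else g

/-- The catamorphism (fold) for step functions. -/
def fold {X Y : Type} (φ : X → Y) (ψ : OO → Y → Y → Y) : S X → Y
  | const x => φ x
  | glue o f g => ψ o (fold φ ψ f) (fold φ ψ g)

/-- `map` for step functions. -/
def mapS {X Y : Type} (f : X → Y) : S X → S Y
  | const x => const (f x)
  | glue o l r => glue o (mapS f l) (mapS f r)

/-- The applicative `ap` (pointwise application) for step functions. -/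
def ap {X Y : Type} : S (X → Y) → S X → S Y
  | const f, x => mapS f x
  | glue o fl fr, x => glue o (ap fl (splitL x o)) (ap fr (splitR x o))

/-- Binary map. -/
def map2 {X Y Z : Type} (f : X → Y → Z) (a : S X) (b : S Y) : S Z :=
  ap (mapS f a) b

/-- `fold⋆`: a step function of propositions holds everywhere. -/
def foldStar : S Prop → Prop := fold id (fun _ p q => p ∧ q)

/-- Lifting of a relation to step functions: it holds pointwise everywhere. -/
def liftRel {X Y : Type} (R : X → Y → Prop) (f : S X) (g : S Y) : Prop :=
  foldStar (map2 R f g)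

/-- The equivalence `≍` on step functions: the lifting of equality. -/
def equivS {X : Type} (f g : S X) : Prop := liftRel Eq f g

def foldSup : S ℚ → ℚ := fold id (fun _ x y => max x y)

def foldAffine : S ℚ → ℚ := fold id (fun o x y => o.1 * x + (1 - o.1) * y)

def normInf (f : S ℚ) : ℚ := foldSup (mapS (fun q => |q|) f)

def normOne (f : S ℚ) : ℚ := foldAffine (mapS (fun q => |q|) f)

def dInf (f g : S ℚ) : ℚ := normInf (map2 (· - ·) f g)

def dOne (f g : S ℚ) : ℚ := normOne (map2 (· - ·) f g)

end S

open S

/-!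
A step function `f : S X` denotes the function `eval f : ℚ → X` on `[0, 1)`, reading a node
`glue o l r` as `l` rescaled onto `[0, o)` and `r` rescaled onto `[o, 1)`. Splitting, `mapS`, `ap`
and `map2` commute with evaluation, and `foldStar p` says exactly that `eval p` holds on all of
`[0, 1)`. Hence the lifted relation is the pointwise relation of the denotations, and it inherits
transitivity pointwise.
-/

namespace S

variable {X Y Z : Type}

/-- Breakpoints belong to the right piece. -/
def eval : S X → ℚ → X
  | const x, _ => x
  | glue o f g, t => if t < o.1 then eval f (t / o.1) else eval g ((t - o.1) / (1 - o.1))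

theorem eval_glue_of_lt {o : OO} {t : ℚ} (f g : S X) (h : t < o.1) :
    eval (glue o f g) t = eval f (t / o.1) :=
  if_pos h

theorem eval_glue_of_le {o : OO} {t : ℚ} (f g : S X) (h : o.1 ≤ t) :
    eval (glue o f g) t = eval g ((t - o.1) / (1 - o.1)) :=
  if_neg (not_lt.2 h)

theorem val_divO (a o : OO) (h : a.1 < o.1) : (divO a o h).1 = a.1 / o.1 := rfl

theorem val_subO (a o : OO) (h : o.1 < a.1) : (subO a o h).1 = (a.1 - o.1) / (1 - o.1) := rfl

theorem eval_splitL (x : S X) (a : OO) {s : ℚ} (hs : s < 1) :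
    eval (splitL x a) s = eval x (a.1 * s) := by
  induction x generalizing a s with
  | const x => rfl
  | glue o f g ihf ihg =>
    obtain ⟨ho0, ho1⟩ := o.2
    have ha0 : 0 < a.1 := a.2.1
    have has : a.1 * s < a.1 := mul_lt_of_lt_one_right ha0 hs
    rcases lt_trichotomy a.1 o.1 with hao | hao | hao
    · rw [splitL, dif_pos hao, ihf _ hs, eval_glue_of_lt _ _ (has.trans hao), val_divO]
      congr 1
      field_simp
    · obtain rfl : a = o := Subtype.ext hao
      rw [splitL, dif_neg (lt_irrefl _), dif_neg (lt_irrefl _), eval_glue_of_lt _ _ has]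
      congr 1
      field_simp
    · rw [splitL, dif_neg (lt_asymm hao), dif_pos hao]
      have hoa : o.1 / a.1 < 1 := (div_lt_one ha0).2 hao
      rcases lt_or_ge s (o.1 / a.1) with hso | hso
      · rw [eval_glue_of_lt _ _ (by rwa [val_divO]),
          eval_glue_of_lt _ _ (by rwa [lt_div_iff₀' ha0] at hso), val_divO]
        congr 1
        field_simp
      · have hs' : (s - o.1 / a.1) / (1 - o.1 / a.1) < 1 :=
          (div_lt_one (by linarith)).2 (by linarith)
        rw [eval_glue_of_le _ _ (by rwa [val_divO]), val_divO, ihg _ hs',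
          eval_glue_of_le _ _ (by rwa [div_le_iff₀' ha0] at hso), val_subO]
        have : a.1 - o.1 ≠ 0 := by linarith
        have : 1 - o.1 ≠ 0 := by linarith
        congr 1
        field_simp

theorem eval_splitR (x : S X) (a : OO) {s : ℚ} (hs : 0 ≤ s) :
    eval (splitR x a) s = eval x (a.1 + (1 - a.1) * s) := by
  induction x generalizing a s with
  | const x => rfl
  | glue o f g ihf ihg =>
    obtain ⟨ho0, ho1⟩ := o.2
    obtain ⟨ha0, ha1⟩ := a.2
    have has : a.1 ≤ a.1 + (1 - a.1) * s := by nlinarith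
    have : 1 - o.1 ≠ 0 := by linarith
    have : 1 - a.1 ≠ 0 := by linarith
    rcases lt_trichotomy a.1 o.1 with hao | hao | hao
    · rw [splitR, dif_pos hao]
      have : o.1 - a.1 ≠ 0 := by linarith
      rcases lt_or_ge s ((o.1 - a.1) / (1 - a.1)) with hso | hso
      · rw [eval_glue_of_lt _ _ (by rwa [val_subO]), val_subO,
          ihf _ (div_nonneg hs (div_nonneg (by linarith) (by linarith))),
          eval_glue_of_lt _ _ (by rw [lt_div_iff₀ (by linarith)] at hso; linarith), val_divO]
        congr 1
        field_simp
      · rw [eval_glue_of_le _ _ (by rwa [val_subO]), val_subO,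
          eval_glue_of_le _ _ (by rw [div_le_iff₀ (by linarith)] at hso; linarith)]
        congr 1
        rw [one_sub_div (by linarith), sub_sub_sub_cancel_right]
        field_simp
        ring
    · obtain rfl : a = o := Subtype.ext hao
      rw [splitR, dif_neg (lt_irrefl _), dif_neg (lt_irrefl _), eval_glue_of_le _ _ has]
      congr 1
      field_simp
      ring
    · rw [splitR, dif_neg (lt_asymm hao), dif_pos hao, ihg _ hs,
        eval_glue_of_le _ _ (hao.le.trans has), val_subO]
      congr 1
      field_simp
      ring

theorem eval_mapS (φ : X → Y) (x : S X) (t : ℚ) : eval (mapS φ x) t = φ (eval x t) := by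
  induction x generalizing t with
  | const x => rfl
  | glue o l r ihl ihr =>
    rcases lt_or_ge t o.1 with h | h
    · rw [mapS, eval_glue_of_lt _ _ h, eval_glue_of_lt _ _ h, ihl]
    · rw [mapS, eval_glue_of_le _ _ h, eval_glue_of_le _ _ h, ihr]

theorem eval_ap (F : S (X → Y)) (x : S X) (t : ℚ) : eval (ap F x) t = eval F t (eval x t) := by
  induction F generalizing x t with
  | const φ => exact eval_mapS φ x t
  | glue o l r ihl ihr =>
    obtain ⟨ho0, ho1⟩ := o.2
    rcases lt_or_ge t o.1 with h | h
    · rw [ap, eval_glue_of_lt _ _ h, eval_glue_of_lt _ _ h, ihl,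
        eval_splitL _ _ ((div_lt_one ho0).2 h), mul_div_cancel₀ _ ho0.ne']
    · rw [ap, eval_glue_of_le _ _ h, eval_glue_of_le _ _ h, ihr,
        eval_splitR _ _ (div_nonneg (by linarith) (by linarith)),
        mul_div_cancel₀ _ (by linarith), add_sub_cancel]

theorem eval_map2 (R : X → Y → Z) (a : S X) (b : S Y) (t : ℚ) :
    eval (map2 R a b) t = R (eval a t) (eval b t) := by
  rw [map2, eval_ap, eval_mapS]

theorem foldStar_iff (p : S Prop) : foldStar p ↔ ∀ t ∈ Set.Ico (0 : ℚ) 1, eval p t := by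
  induction p with
  | const P => exact ⟨fun hP _ _ => hP, fun h => h 0 ⟨le_rfl, one_pos⟩⟩
  | glue o l r ihl ihr =>
    obtain ⟨ho0, ho1⟩ := o.2
    change foldStar l ∧ foldStar r ↔ _
    rw [ihl, ihr]
    constructor
    · rintro ⟨hl, hr⟩ t ⟨ht0, ht1⟩
      rcases lt_or_ge t o.1 with h | h
      · rw [eval_glue_of_lt _ _ h]
        exact hl _ ⟨div_nonneg ht0 ho0.le, (div_lt_one ho0).2 h⟩
      · rw [eval_glue_of_le _ _ h]
        exact hr _ ⟨div_nonneg (by linarith) (by linarith),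
          (div_lt_one (by linarith)).2 (by linarith)⟩
    · intro h
      constructor
      · rintro s ⟨hs0, hs1⟩
        have := h (o.1 * s) ⟨by positivity, by nlinarith⟩
        rwa [eval_glue_of_lt _ _ (mul_lt_of_lt_one_right ho0 hs1), mul_div_cancel_left₀ _ ho0.ne']
          at this
      · rintro s ⟨hs0, hs1⟩
        have := h (o.1 + (1 - o.1) * s) ⟨by nlinarith, by nlinarith⟩
        rwa [eval_glue_of_le _ _ (by nlinarith), add_sub_cancel_left,
          mul_div_cancel_left₀ _ (by linarith)] at this

theorem liftRel_iff (R : X → Y → Prop) (f : S X) (g : S Y) :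
    liftRel R f g ↔ ∀ t ∈ Set.Ico (0 : ℚ) 1, R (eval f t) (eval g t) := by
  simp only [liftRel, foldStar_iff, eval_map2]

theorem liftRel_trans {R : X → X → Prop} [IsTrans X R] {f g h : S X}
    (hfg : liftRel R f g) (hgh : liftRel R g h) : liftRel R f h := by
  rw [liftRel_iff] at *
  exact fun t ht => _root_.trans (hfg t ht) (hgh t ht)

end S

/-- The pointwise order lifted to rational step functions is transitive. -/
theorem step_le_trans (f g h : S ℚ) :
    foldStar (map2 (· ≤ ·) f g) → foldStar (map2 (· ≤ ·) g h) →
    foldStar (map2 (· ≤ ·) f h) :=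
  liftRel_trans
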